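/- arXiv:2602.08647 — 6 statements merged into one kernel-verified Lean document; each statement's English description precedes it below -/
import Mathlib

section
/- Let Y0, Y1 be integrable real-valued random variables. Define P-ACE = ∫_ℝ P(Y0 < y ≤ Y1) dy and N-ACE = ∫_ℝ P(Y1 < y ≤ Y0) dy, and assume both are finite. Then E[Y1] - E[Y0] = P-ACE - N-ACE. -/
open MeasureTheory ENNReal
open scoped ENNReal

lemma aux_swap {Ω : Type*} [MeasurableSpace Ω] (μ : Measure Ω) [IsProbabilityMeasure μ]
    (Y0 Y1 : Ω → ℝ) (hY0 : Measurable Y0) (hY1 : Measurable Y1) :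
    ∫⁻ y : ℝ, μ {ω | Y0 ω < y ∧ y ≤ Y1 ω}
      = ∫⁻ ω, ENNReal.ofReal (Y1 ω - Y0 ω) ∂μ := by
  set S : Set (ℝ × Ω) := {p | Y0 p.2 < p.1 ∧ p.1 ≤ Y1 p.2} with hS
  have hSm : MeasurableSet S :=
    (measurableSet_lt (hY0.comp measurable_snd) measurable_fst).inter
      (measurableSet_le measurable_fst (hY1.comp measurable_snd))
  have h1 : ∀ y : ℝ, μ {ω | Y0 ω < y ∧ y ≤ Y1 ω}
      = ∫⁻ ω, S.indicator (fun _ => (1 : ℝ≥0∞)) (y, ω) ∂μ := by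
    intro y
    have hm : MeasurableSet {ω | Y0 ω < y ∧ y ≤ Y1 ω} :=
      (measurableSet_lt hY0 measurable_const).inter
        (measurableSet_le measurable_const hY1)
    rw [← lintegral_indicator_one hm]
    congr 1
  simp_rw [h1]
  rw [lintegral_lintegral_swap]
  · refine lintegral_congr fun ω => ?_
    have : ∀ y : ℝ, S.indicator (fun _ => (1 : ℝ≥0∞)) (y, ω)
        = (Set.Ioc (Y0 ω) (Y1 ω)).indicator (fun _ => (1 : ℝ≥0∞)) y := by
      intro y
      simp [Set.indicator_apply, hS, Set.mem_Ioc]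
    simp_rw [this]
    exact (lintegral_indicator_one measurableSet_Ioc).trans (Real.volume_Ioc)
  · exact ((measurable_indicator_const_iff 1).mpr hSm).aemeasurable

theorem stmt2 {Ω : Type*} [MeasurableSpace Ω] (μ : Measure Ω) [IsProbabilityMeasure μ]
    (Y0 Y1 : Ω → ℝ) (hY0 : Measurable Y0) (hY1 : Measurable Y1)
    (hi0 : Integrable Y0 μ) (hi1 : Integrable Y1 μ)
    (hP : ∫⁻ y : ℝ, μ {ω | Y0 ω < y ∧ y ≤ Y1 ω} ≠ ⊤)
    (hN : ∫⁻ y : ℝ, μ {ω | Y1 ω < y ∧ y ≤ Y0 ω} ≠ ⊤) :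
    (∫ ω, Y1 ω ∂μ) - (∫ ω, Y0 ω ∂μ)
      = (∫⁻ y : ℝ, μ {ω | Y0 ω < y ∧ y ≤ Y1 ω}).toReal
        - (∫⁻ y : ℝ, μ {ω | Y1 ω < y ∧ y ≤ Y0 ω}).toReal := by
  rw [aux_swap μ Y0 Y1 hY0 hY1, aux_swap μ Y1 Y0 hY1 hY0,
    ← integral_sub hi1 hi0]
  simpa [neg_sub] using integral_eq_lintegral_pos_part_sub_lintegral_neg_part (hi1.sub hi0)
end

section
/- Let Y0, Y1 be random variables taking values in {0, 1} ⊆ ℝ. Then ∫_ℝ P(Y0 < y ≤ Y1) dy = P(Y0 = 0 ∧ Y1 = 1), i.e., the P-ACE for binary outcomes reduces to the treatment benefit rate. -/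
open MeasureTheory

theorem stmt4 {Ω : Type*} [MeasurableSpace Ω] (μ : Measure Ω) [IsProbabilityMeasure μ]
    (Y0 Y1 : Ω → ℝ) (hY0 : Measurable Y0) (hY1 : Measurable Y1)
    (hb0 : ∀ᵐ ω ∂μ, Y0 ω = 0 ∨ Y0 ω = 1) (hb1 : ∀ᵐ ω ∂μ, Y1 ω = 0 ∨ Y1 ω = 1) :
    ∫⁻ y : ℝ, μ {ω | Y0 ω < y ∧ y ≤ Y1 ω} = μ {ω | Y0 ω = 0 ∧ Y1 ω = 1} := by
  have key : ∀ y : ℝ, μ {ω | Y0 ω < y ∧ y ≤ Y1 ω}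
      = Set.indicator (Set.Ioc (0:ℝ) 1) (fun _ => μ {ω | Y0 ω = 0 ∧ Y1 ω = 1}) y := by
    intro y
    by_cases hy : y ∈ Set.Ioc (0:ℝ) 1
    · rw [Set.indicator_of_mem hy]
      apply measure_congr
      rw [Filter.eventuallyEq_set]
      filter_upwards [hb0, hb1] with ω h0 h1
      constructor
      · rintro ⟨hlt, hle⟩
        refine ⟨?_, ?_⟩
        · rcases h0 with h | h
          · exact h
          · exfalso; linarith [hy.2]
        · rcases h1 with h | h
          · exfalso; linarith [hy.1]
          · exact h
      · rintro ⟨h0', h1'⟩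
        exact ⟨by rw [h0']; exact hy.1, by rw [h1']; exact hy.2⟩
    · rw [Set.indicator_of_notMem hy]
      rw [measure_eq_zero_iff_ae_notMem]
      filter_upwards [hb0, hb1] with ω h0 h1
      simp only [Set.mem_setOf_eq, not_and, not_le]
      intro hlt
      rw [Set.mem_Ioc, not_and_or, not_lt, not_le] at hy
      rcases hy with hy | hy
      · rcases h0 with h | h <;> linarith
      · rcases h1 with h | h <;> linarith
  simp_rw [key]
  rw [lintegral_indicator measurableSet_Ioc, setLIntegral_const, Real.volume_Ioc]
  norm_num
end

section
/- Let Y0, Y1 be random variables taking values in {0, 1} ⊆ ℝ. Then ∫_ℝ P(Y1 < y ≤ Y0) dy = P(Y0 = 1 ∧ Y1 = 0), i.e., the N-ACE for binary outcomes reduces to the treatment harm rate. -/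
open MeasureTheory

theorem stmt5 {Ω : Type*} [MeasurableSpace Ω] (μ : Measure Ω) [IsProbabilityMeasure μ]
    (Y0 Y1 : Ω → ℝ) (hY0 : Measurable Y0) (hY1 : Measurable Y1)
    (hb0 : ∀ᵐ ω ∂μ, Y0 ω = 0 ∨ Y0 ω = 1) (hb1 : ∀ᵐ ω ∂μ, Y1 ω = 0 ∨ Y1 ω = 1) :
    ∫⁻ y : ℝ, μ {ω | Y1 ω < y ∧ y ≤ Y0 ω} = μ {ω | Y0 ω = 1 ∧ Y1 ω = 0} := by
  have key : ∀ y : ℝ, μ {ω | Y1 ω < y ∧ y ≤ Y0 ω}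
      = (Set.Ioc (0:ℝ) 1).indicator (fun _ => μ {ω | Y0 ω = 1 ∧ Y1 ω = 0}) y := by
    intro y
    by_cases hy : y ∈ Set.Ioc (0:ℝ) 1
    · rw [Set.indicator_of_mem hy]
      apply measure_congr
      rw [Filter.eventuallyEq_set]
      filter_upwards [hb0, hb1] with ω h0 h1
      obtain ⟨hy0, hy1⟩ := hy
      constructor
      · rintro ⟨ha, hb⟩
        rcases h0 with h0 | h0 <;> rcases h1 with h1 | h1 <;>
          simp_all <;> linarith
      · rintro ⟨ha, hb⟩
        rw [ha, hb]
        exact ⟨hy0, hy1⟩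
    · rw [Set.indicator_of_notMem hy]
      rw [Set.mem_Ioc, not_and_or] at hy
      push_neg at hy
      rw [measure_eq_zero_iff_ae_notMem]
      filter_upwards [hb0, hb1] with ω h0 h1
      simp only [Set.mem_setOf_eq, not_and_or, not_lt, not_le]
      rcases hy with hy | hy
      · left
        rcases h1 with h1 | h1 <;> rw [h1] <;> linarith
      · right
        rcases h0 with h0 | h0 <;> rw [h0] <;> linarith
  rw [lintegral_congr key, lintegral_indicator_const measurableSet_Ioc,
    Real.volume_Ioc]
  simp
end

section
/- Let Y0, Y1 be real-valued random variables and X a random variable taking values in {0, 1}. For any real y, P(Y0 < y ≤ Y1) ≥ P(Y0 < y) - P(Y0 < y ∧ Y1 < y) and, using the law of total probability for the marginal, P(Y0 < y ≤ Y1) ≥ max(0, P(Y0 < y) - P(Y1 < y), P(Y0 < y) - P(Y < y), P(Y < y) - P(Y1 < y)), where Y := if X = 1 then Y1 else Y0. -/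
open MeasureTheory

theorem stmt7 {Ω : Type*} [MeasurableSpace Ω] (μ : Measure Ω) [IsProbabilityMeasure μ]
    (Y0 Y1 : Ω → ℝ) (X : Ω → ℝ)
    (hY0 : Measurable Y0) (hY1 : Measurable Y1) (hX : Measurable X)
    (hXb : ∀ ω, X ω = 0 ∨ X ω = 1)
    (Y : Ω → ℝ) (hY : ∀ ω, Y ω = if X ω = 1 then Y1 ω else Y0 ω) (y : ℝ) :
    (μ {ω | Y0 ω < y}).toReal - (μ {ω | Y0 ω < y ∧ Y1 ω < y}).toReal
        ≤ (μ {ω | Y0 ω < y ∧ y ≤ Y1 ω}).toReal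
      ∧ max (max 0 ((μ {ω | Y0 ω < y}).toReal - (μ {ω | Y1 ω < y}).toReal))
          (max ((μ {ω | Y0 ω < y}).toReal - (μ {ω | Y ω < y}).toReal)
            ((μ {ω | Y ω < y}).toReal - (μ {ω | Y1 ω < y}).toReal))
        ≤ (μ {ω | Y0 ω < y ∧ y ≤ Y1 ω}).toReal := by
  have mA : MeasurableSet {ω | Y0 ω < y ∧ y ≤ Y1 ω} :=
    (measurableSet_lt hY0 measurable_const).inter (measurableSet_le measurable_const hY1)
  have mB : MeasurableSet {ω | Y0 ω < y ∧ Y1 ω < y} :=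
    (measurableSet_lt hY0 measurable_const).inter (measurableSet_lt hY1 measurable_const)
  have hsplit : μ {ω | Y0 ω < y} =
      μ {ω | Y0 ω < y ∧ Y1 ω < y} + μ {ω | Y0 ω < y ∧ y ≤ Y1 ω} := by
    rw [← measure_union ?_ mA]
    · congr 1
      ext ω
      simp only [Set.mem_union, Set.mem_setOf_eq]
      constructor
      · intro h
        rcases lt_or_ge (Y1 ω) y with h1 | h1
        · exact Or.inl ⟨h, h1⟩
        · exact Or.inr ⟨h, h1⟩
      · rintro (⟨h, _⟩ | ⟨h, _⟩) <;> exact h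
    · rw [Set.disjoint_left]
      rintro ω ⟨_, h1⟩ ⟨_, h2⟩
      linarith
  have hfin : ∀ s : Set Ω, μ s ≠ ⊤ := fun s => measure_ne_top μ s
  have hE : (μ {ω | Y0 ω < y}).toReal =
      (μ {ω | Y0 ω < y ∧ Y1 ω < y}).toReal + (μ {ω | Y0 ω < y ∧ y ≤ Y1 ω}).toReal := by
    rw [hsplit, ENNReal.toReal_add (hfin _) (hfin _)]
  have hB1 : (μ {ω | Y0 ω < y ∧ Y1 ω < y}).toReal ≤ (μ {ω | Y1 ω < y}).toReal := by
    apply ENNReal.toReal_mono (hfin _)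
    exact measure_mono fun ω h => h.2
  have hBY : (μ {ω | Y0 ω < y ∧ Y1 ω < y}).toReal ≤ (μ {ω | Y ω < y}).toReal := by
    apply ENNReal.toReal_mono (hfin _)
    apply measure_mono
    rintro ω ⟨h0, h1⟩
    simp only [Set.mem_setOf_eq, hY ω]
    split_ifs <;> assumption
  have hYle : (μ {ω | Y ω < y}).toReal ≤
      (μ {ω | Y1 ω < y}).toReal + (μ {ω | Y0 ω < y ∧ y ≤ Y1 ω}).toReal := by
    rw [← ENNReal.toReal_add (hfin _) (hfin _)]
    apply ENNReal.toReal_mono (by simp [hfin, ENNReal.add_ne_top])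
    calc μ {ω | Y ω < y} ≤ μ ({ω | Y1 ω < y} ∪ {ω | Y0 ω < y ∧ y ≤ Y1 ω}) := by
          apply measure_mono
          intro ω h
          simp only [Set.mem_setOf_eq, hY ω] at h
          simp only [Set.mem_union, Set.mem_setOf_eq]
          split_ifs at h with hx
          · exact Or.inl h
          · rcases lt_or_ge (Y1 ω) y with h1 | h1
            · exact Or.inl h1
            · exact Or.inr ⟨h, h1⟩
      _ ≤ _ := measure_union_le _ _
  refine ⟨by linarith, ?_⟩
  apply max_le
  · apply max_le
    · exact ENNReal.toReal_nonneg
    · linarith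
  · exact max_le (by linarith) (by linarith)
end

section
/- Suppose Y0, Y1 are integrable real-valued random variables such that for every real y, either P(Y0 < y ≤ Y1) = 0 or P(Y1 < y ≤ Y0) = 0, and both ∫_ℝ P(Y0 < y ≤ Y1) dy and ∫_ℝ P(Y1 < y ≤ Y0) dy are finite. Then P-ACE = ∫_ℝ max(P(Y0 < y) - P(Y1 < y), 0) dy and N-ACE = ∫_ℝ max(P(Y1 < y) - P(Y0 < y), 0) dy. -/
/-!
Write `F₀ y = P(Y0 < y)` and `F₁ y = P(Y1 < y)`. Splitting `{Y0 < y}` along `{Y1 < y}` gives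
`F₀ y = P(Y0 < y, Y1 < y) + P(Y0 < y ≤ Y1)`, and symmetrically for `F₁`, so
`F₀ y - F₁ y = P(Y0 < y ≤ Y1) - P(Y1 < y ≤ Y0)`. Since one of the two terms vanishes for every `y`,
`P(Y0 < y ≤ Y1)` is the positive part of `F₀ y - F₁ y`; integrating in `y` gives P-ACE, and
exchanging `Y0` and `Y1` gives N-ACE.
-/

open MeasureTheory

theorem measureReal_sdiff_eq_max_sub {α : Type*} [MeasurableSpace α] {μ : Measure α}
    [IsFiniteMeasure μ] {s t : Set α} (hs : MeasurableSet s) (ht : MeasurableSet t)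
    (h : μ (s \ t) = 0 ∨ μ (t \ s) = 0) :
    μ.real (s \ t) = max (μ.real s - μ.real t) 0 := by
  have hs_split : μ.real (s ∩ t) + μ.real (s \ t) = μ.real s := measureReal_inter_add_sdiff ht
  have ht_split : μ.real (s ∩ t) + μ.real (t \ s) = μ.real t := by
    rw [Set.inter_comm]; exact measureReal_inter_add_sdiff hs
  rcases h with h | h
  · have h' : μ.real (s \ t) = 0 := by simp [Measure.real, h]
    have : 0 ≤ μ.real (t \ s) := measureReal_nonneg
    rw [h', max_eq_right (by linarith)]
  · have h' : μ.real (t \ s) = 0 := by simp [Measure.real, h]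
    have : 0 ≤ μ.real (s \ t) := measureReal_nonneg
    rw [max_eq_left (by linarith)]
    linarith

theorem setOf_lt_sdiff_setOf_lt {Ω : Type*} (Y0 Y1 : Ω → ℝ) (y : ℝ) :
    {ω | Y0 ω < y} \ {ω | Y1 ω < y} = {ω | Y0 ω < y ∧ y ≤ Y1 ω} := by
  ext ω; simp

section

variable {Ω : Type*} [MeasurableSpace Ω] {μ : Measure Ω} {Y0 Y1 : Ω → ℝ}

theorem measurable_measure_lt_and_le [SFinite μ] (hY0 : Measurable Y0) (hY1 : Measurable Y1) :
    Measurable fun y : ℝ => μ {ω | Y0 ω < y ∧ y ≤ Y1 ω} :=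
  measurable_measure_prodMk_left (s := {p : ℝ × Ω | Y0 p.2 < p.1 ∧ p.1 ≤ Y1 p.2})
    ((measurableSet_lt (hY0.comp measurable_snd) measurable_fst).inter
      (measurableSet_le measurable_fst (hY1.comp measurable_snd)))

theorem toReal_lintegral_measure_lt_and_le [IsFiniteMeasure μ]
    (hY0 : Measurable Y0) (hY1 : Measurable Y1)
    (hmono : ∀ y : ℝ, μ {ω | Y0 ω < y ∧ y ≤ Y1 ω} = 0 ∨ μ {ω | Y1 ω < y ∧ y ≤ Y0 ω} = 0) :
    (∫⁻ y : ℝ, μ {ω | Y0 ω < y ∧ y ≤ Y1 ω}).toReal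
      = ∫ y : ℝ, max ((μ {ω | Y0 ω < y}).toReal - (μ {ω | Y1 ω < y}).toReal) 0 := by
  have pointwise (y : ℝ) : (μ {ω | Y0 ω < y ∧ y ≤ Y1 ω}).toReal
      = max ((μ {ω | Y0 ω < y}).toReal - (μ {ω | Y1 ω < y}).toReal) 0 := by
    simp only [← setOf_lt_sdiff_setOf_lt] at hmono ⊢
    exact measureReal_sdiff_eq_max_sub (measurableSet_lt hY0 measurable_const)
      (measurableSet_lt hY1 measurable_const) (hmono y)
  rw [← integral_toReal (measurable_measure_lt_and_le hY0 hY1).aemeasurable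
    (.of_forall fun _ => measure_lt_top μ _)]
  exact integral_congr_ae (.of_forall pointwise)

end

theorem stmt9_general {Ω : Type*} [MeasurableSpace Ω] (μ : Measure Ω) [IsProbabilityMeasure μ]
    (Y0 Y1 : Ω → ℝ) (hY0 : Measurable Y0) (hY1 : Measurable Y1)
    (hmono : ∀ y : ℝ, μ {ω | Y0 ω < y ∧ y ≤ Y1 ω} = 0 ∨ μ {ω | Y1 ω < y ∧ y ≤ Y0 ω} = 0) :
    (∫⁻ y : ℝ, μ {ω | Y0 ω < y ∧ y ≤ Y1 ω}).toReal
        = ∫ y : ℝ, max ((μ {ω | Y0 ω < y}).toReal - (μ {ω | Y1 ω < y}).toReal) 0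
      ∧ (∫⁻ y : ℝ, μ {ω | Y1 ω < y ∧ y ≤ Y0 ω}).toReal
        = ∫ y : ℝ, max ((μ {ω | Y1 ω < y}).toReal - (μ {ω | Y0 ω < y}).toReal) 0 :=
  ⟨toReal_lintegral_measure_lt_and_le hY0 hY1 hmono,
    toReal_lintegral_measure_lt_and_le hY1 hY0 fun y => (hmono y).symm⟩

theorem stmt9 {Ω : Type*} [MeasurableSpace Ω] (μ : Measure Ω) [IsProbabilityMeasure μ]
    (Y0 Y1 : Ω → ℝ) (hY0 : Measurable Y0) (hY1 : Measurable Y1)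
    (hi0 : Integrable Y0 μ) (hi1 : Integrable Y1 μ)
    (hmono : ∀ y : ℝ, μ {ω | Y0 ω < y ∧ y ≤ Y1 ω} = 0 ∨ μ {ω | Y1 ω < y ∧ y ≤ Y0 ω} = 0)
    (hP : ∫⁻ y : ℝ, μ {ω | Y0 ω < y ∧ y ≤ Y1 ω} ≠ ⊤)
    (hN : ∫⁻ y : ℝ, μ {ω | Y1 ω < y ∧ y ≤ Y0 ω} ≠ ⊤) :
    (∫⁻ y : ℝ, μ {ω | Y0 ω < y ∧ y ≤ Y1 ω}).toReal
        = ∫ y : ℝ, max ((μ {ω | Y0 ω < y}).toReal - (μ {ω | Y1 ω < y}).toReal) 0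
      ∧ (∫⁻ y : ℝ, μ {ω | Y1 ω < y ∧ y ≤ Y0 ω}).toReal
        = ∫ y : ℝ, max ((μ {ω | Y1 ω < y}).toReal - (μ {ω | Y0 ω < y}).toReal) 0 :=
  stmt9_general μ Y0 Y1 hY0 hY1 hmono
end

section
/- If Y0 ≤ Y1 almost surely (no negatively affected subjects), then ∫_ℝ P(Y1 < y ≤ Y0) dy = 0 and ∫_ℝ P(Y0 < y ≤ Y1) dy = E[Y1] - E[Y0], assuming Y0 and Y1 are integrable. -/
open MeasureTheory

theorem stmt10 {Ω : Type*} [MeasurableSpace Ω] (μ : Measure Ω) [IsProbabilityMeasure μ]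
    (Y0 Y1 : Ω → ℝ) (hY0 : Measurable Y0) (hY1 : Measurable Y1)
    (hi0 : Integrable Y0 μ) (hi1 : Integrable Y1 μ)
    (hle : ∀ᵐ ω ∂μ, Y0 ω ≤ Y1 ω) :
    ∫⁻ y : ℝ, μ {ω | Y1 ω < y ∧ y ≤ Y0 ω} = 0
      ∧ (∫⁻ y : ℝ, μ {ω | Y0 ω < y ∧ y ≤ Y1 ω}).toReal
        = (∫ ω, Y1 ω ∂μ) - (∫ ω, Y0 ω ∂μ) := by
  have hnull : μ {ω | Y1 ω < Y0 ω} = 0 := by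
    have : ∀ᵐ ω ∂μ, ¬ (Y1 ω < Y0 ω) := hle.mono fun ω h => not_lt.2 h
    simpa [ae_iff] using this
  constructor
  · have h0 : ∀ y : ℝ, μ {ω | Y1 ω < y ∧ y ≤ Y0 ω} = 0 := by
      intro y
      refine measure_mono_null (fun ω hω => ?_) hnull
      exact lt_of_lt_of_le hω.1 hω.2
    simp [h0]
  · set S : Set (ℝ × Ω) := {p | Y0 p.2 < p.1 ∧ p.1 ≤ Y1 p.2} with hS
    have hSm : MeasurableSet S := by
      exact (measurableSet_lt (hY0.comp measurable_snd) measurable_fst).inter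
        (measurableSet_le measurable_fst (hY1.comp measurable_snd))
    have key : ∫⁻ y : ℝ, μ {ω | Y0 ω < y ∧ y ≤ Y1 ω}
        = ∫⁻ ω, ENNReal.ofReal (Y1 ω - Y0 ω) ∂μ := by
      have h1 : ∫⁻ y : ℝ, μ {ω | Y0 ω < y ∧ y ≤ Y1 ω}
          = (MeasureTheory.volume.prod μ) S := by
        rw [Measure.prod_apply hSm]
        rfl
      have h2 : (MeasureTheory.volume.prod μ) S
          = ∫⁻ ω, MeasureTheory.volume ((fun y => (y, ω)) ⁻¹' S) ∂μ :=
        Measure.prod_apply_symm hSm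
      rw [h1, h2]
      refine lintegral_congr fun ω => ?_
      have : ((fun y => (y, ω)) ⁻¹' S) = Set.Ioc (Y0 ω) (Y1 ω) := rfl
      rw [this, Real.volume_Ioc]
    have hnn : 0 ≤ᵐ[μ] fun ω => Y1 ω - Y0 ω := hle.mono fun ω h => sub_nonneg.2 h
    have hint : Integrable (fun ω => Y1 ω - Y0 ω) μ := hi1.sub hi0
    have hof := ofReal_integral_eq_lintegral_ofReal hint hnn
    rw [key, ← hof, ENNReal.toReal_ofReal (integral_nonneg_of_ae hnn),
      integral_sub hi1 hi0]
end
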